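/- Let G be a group and N a normal subgroup of G such that the identity is the only nil-element of the quotient group G/N. Then every quasi-nil element of G belongs to N. -/

import Mathlib

/-- Engel words with the convention of the paper: the commutator is
`[x, y] = x⁻¹ * y⁻¹ * x * y`, `engelWord 0 x y = x` and
`engelWord (n+1) x y = [engelWord n x y, y]`; thus for `n ≥ 1`,
`engelWord n x y` is the Engel word `e_n(x, y)`. -/
def engelWord {G : Type*} [Group G] : ℕ → G → G → G
  | 0, x, _ => x
  | n + 1, x, y => (engelWord n x y)⁻¹ * y⁻¹ * engelWord n x y * y

/-- Iterated Engel words: `epsEngel [(n₁,a₁),…,(n_k,a_k)] y` is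
`ε_{(n₁,…,n_k)}(a₁,…,a_k; y)`, defined by `ε_{(n₁)}(a₁;y) = e_{n₁}(a₁,y)` and
`ε_{(n₁,…,n_k)}(a₁,…,a_k;y) = e_{n_k}(a_k, ε_{(n₁,…,n_{k-1})}(a₁,…,a_{k-1};y))`. -/
def epsEngel {G : Type*} [Group G] (l : List (ℕ × G)) (y : G) : G :=
  l.foldl (fun z p => engelWord p.1 p.2 z) y

/-- `g` is a nil-element if for every `a` there is `n ≥ 1` with `e_n(a, g) = 1`. -/
def IsNilElement {G : Type*} [Group G] (g : G) : Prop :=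
  ∀ a : G, ∃ n, 1 ≤ n ∧ engelWord n a g = 1

/-- A group is locally nilpotent if every finitely generated subgroup is nilpotent. -/
def LocallyNilpotent (G : Type*) [Group G] : Prop :=
  ∀ H : Subgroup G, H.FG → Group.IsNilpotent H

/-- `g` is quasi-nil of order ≤ `k`: there are functions `ν i : G^(i+1) → ℕ` (with values ≥ 1,
`ν i` depending only on `a₁,…,a_{i+1}` and `g`) such that for all `a : Fin k → G`,
`ε_{(ν₁(a₁),…,ν_k(a₁,…,a_k))}(a₁,…,a_k; g) = 1`. -/
def IsQuasiNilOfOrder {G : Type*} [Group G] (k : ℕ) (g : G) : Prop :=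
  ∃ ν : ∀ i : Fin k, (Fin ((i : ℕ) + 1) → G) → ℕ,
    (∀ i f, 1 ≤ ν i f) ∧
    ∀ a : Fin k → G,
      epsEngel (List.ofFn fun i : Fin k =>
        (ν i fun j => a (Fin.castLE i.isLt j), a i)) g = 1

/-- `g` is quasi-nil if it is quasi-nil of order ≤ `k` for some `k ≥ 1`. -/
def IsQuasiNil {G : Type*} [Group G] (g : G) : Prop :=
  ∃ k, 1 ≤ k ∧ IsQuasiNilOfOrder k g

/-- `g` maps to a nil-element of the quotient `G ⧸ N` (for `N` normal). -/
def IsNilElementQuot {G : Type*} [Group G] (N : Subgroup G) (hN : N.Normal) (g : G) : Prop :=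
  @IsNilElement (G ⧸ N) (@QuotientGroup.Quotient.group G _ N hN) (QuotientGroup.mk g)

/-! Induction on the order `k`. If `g` is quasi-nil of order `≤ k + 1` with weights `ν`, then for
every `a` the element `e_{ν₁(a)}(a, g)` is quasi-nil of order `≤ k` (fix `a₁ = a` in the remaining
weights), so by induction it lies in `N`. Hence the image of `g` in `G/N` is a nil-element, and
therefore trivial. -/

lemma map_engelWord {G H : Type*} [Group G] [Group H] (φ : G →* H) (n : ℕ) (x y : G) :
    φ (engelWord n x y) = engelWord n (φ x) (φ y) := by
  induction n with
  | zero => rfl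
  | succ n ih => simp [engelWord, ih]

lemma epsEngel_cons {G : Type*} [Group G] (n : ℕ) (a : G) (l : List (ℕ × G)) (y : G) :
    epsEngel ((n, a) :: l) y = epsEngel l (engelWord n a y) :=
  rfl

lemma castLE_zero_cons {G : Type*} {k : ℕ} (a : G) (b : Fin k → G) :
    (fun j => (Fin.cons a b : Fin (k + 1) → G) (Fin.castLE (0 : Fin (k + 1)).isLt j)) =
      fun _ => a := by
  funext j
  have hj : Fin.castLE (0 : Fin (k + 1)).isLt j = 0 := Fin.ext (Nat.lt_one_iff.mp j.isLt)
  rw [hj, Fin.cons_zero]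

lemma castLE_succ_cons {G : Type*} {k : ℕ} (a : G) (b : Fin k → G) (i : Fin k) :
    (fun j => (Fin.cons a b : Fin (k + 1) → G) (Fin.castLE i.succ.isLt j)) =
      Fin.cons a fun j => b (Fin.castLE i.isLt j) := by
  funext j
  refine Fin.cases rfl (fun j => ?_) j
  have : Fin.castLE i.succ.isLt j.succ = (Fin.castLE i.isLt j).succ := rfl
  rw [this, Fin.cons_succ, Fin.cons_succ]

lemma isQuasiNilOfOrder_zero_iff {G : Type*} [Group G] {g : G} :
    IsQuasiNilOfOrder 0 g ↔ g = 1 :=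
  ⟨fun ⟨_, _, hν⟩ => hν finZeroElim,
    fun hg => ⟨fun i => i.elim0, fun i => i.elim0, fun _ => hg⟩⟩

lemma IsQuasiNilOfOrder.exists_engelWord {G : Type*} [Group G] {k : ℕ} {g : G}
    (hg : IsQuasiNilOfOrder (k + 1) g) :
    ∃ n : G → ℕ, (∀ a, 1 ≤ n a) ∧ ∀ a, IsQuasiNilOfOrder k (engelWord (n a) a g) := by
  obtain ⟨ν, hν_pos, hν⟩ := hg
  refine ⟨fun a => ν 0 fun _ => a, fun a => hν_pos _ _, fun a => ?_⟩
  refine ⟨fun i f => ν i.succ (Fin.cons a f), fun i f => hν_pos _ _, fun b => ?_⟩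
  have key := hν (Fin.cons a b)
  rw [List.ofFn_succ, epsEngel_cons, castLE_zero_cons] at key
  simpa only [Fin.cons_zero, Fin.cons_succ, castLE_succ_cons] using key

lemma isNilElement_mk_of_forall_engelWord_mem {G : Type*} [Group G] {N : Subgroup G} [N.Normal]
    {g : G} (n : G → ℕ) (hn_pos : ∀ a, 1 ≤ n a) (hn : ∀ a, engelWord (n a) a g ∈ N) :
    IsNilElement (g : G ⧸ N) := by
  intro x
  obtain ⟨a, rfl⟩ := QuotientGroup.mk_surjective x
  refine ⟨n a, hn_pos a, ?_⟩
  rw [← QuotientGroup.mk'_apply, ← QuotientGroup.mk'_apply, ← map_engelWord,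
    QuotientGroup.mk'_apply, QuotientGroup.eq_one_iff]
  exact hn a

lemma IsQuasiNilOfOrder.mem_of_quotient_nilFree {G : Type*} [Group G] {N : Subgroup G} [N.Normal]
    (h : ∀ x : G ⧸ N, IsNilElement x → x = 1) {k : ℕ} {g : G} (hg : IsQuasiNilOfOrder k g) :
    g ∈ N := by
  induction k generalizing g with
  | zero => exact isQuasiNilOfOrder_zero_iff.mp hg ▸ N.one_mem
  | succ k ih =>
    obtain ⟨n, hn_pos, hn⟩ := hg.exists_engelWord
    rw [← QuotientGroup.eq_one_iff]
    exact h _ (isNilElement_mk_of_forall_engelWord_mem n hn_pos fun a => ih (hn a))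

/-- if the identity is the only nil-element of `G/N`, then every
quasi-nil element of `G` lies in `N`. -/
theorem quasiNil_mem_of_quotient_nilFree {G : Type*} [Group G] (N : Subgroup G)
    [N.Normal] (h : ∀ x : G ⧸ N, IsNilElement x → x = 1)
    (g : G) (hg : IsQuasiNil g) : g ∈ N := by
  obtain ⟨k, -, hk⟩ := hg
  exact hk.mem_of_quotient_nilFree h
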